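/- arXiv:1405.4063 — 2 statements merged into one kernel-verified Lean document; each statement's English description precedes it below -/
import Mathlib

section
/- In the ring ℚ⟦X⟧ of formal power series over ℚ, the coefficient of X^20 in the product (1-X^2)^{-1} · (1-X^4)^{-1} · (1-X^6)^{-2} · (1-X^8)^{-1} · (1-X^{10})^{-2} · (1-X^{12})^{-1} · (1-X^{14})^{-1} · (1-X^{16})^{21} · (1-X^{18})^{124} equals -97. -/
/-! The coefficient of `X ^ 20` only sees the product modulo `X ^ 21`. Modulo `X ^ 21`,
`(1 - X ^ d)⁻¹` is a truncated geometric series, and for `2 * d ≥ 21` the binomial expansion gives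
`(1 - X ^ d) ^ n ≡ 1 - n * X ^ d`; the product of the resulting polynomials is expanded directly. -/

open PowerSeries

namespace PowerSeries

theorem coeff_eq_of_smodEq_X_pow {R : Type*} [CommRing R] {f g : R⟦X⟧} {m N : ℕ}
    (h : f ≡ g [SMOD Ideal.span {(X : R⟦X⟧) ^ N}]) (hm : m < N) : coeff m f = coeff m g := by
  rw [SModEq.sub_mem, Ideal.mem_span_singleton, X_pow_dvd_iff] at h
  simpa [sub_eq_zero] using h m hm

theorem inv_one_sub_smodEq_geom_sum {k : Type*} [Field k] {φ : k⟦X⟧} (hφ : constantCoeff φ = 0)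
    (m : ℕ) : (1 - φ)⁻¹ ≡ ∑ i ∈ Finset.range m, φ ^ i [SMOD Ideal.span {φ ^ m}] := by
  have hunit : (1 - φ)⁻¹ * (1 - φ) = 1 := PowerSeries.inv_mul_cancel _ (by simp [hφ])
  rw [SModEq.sub_mem, Ideal.mem_span_singleton]
  refine ⟨(1 - φ)⁻¹, ?_⟩
  linear_combination (∑ i ∈ Finset.range m, φ ^ i) * hunit - (1 - φ)⁻¹ * mul_neg_geom_sum φ m

theorem inv_one_sub_X_pow_smodEq {k : Type*} [Field k] {d N : ℕ} (m : ℕ) (hd : d ≠ 0)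
    (hN : N ≤ d * m) :
    (1 - (X : k⟦X⟧) ^ d)⁻¹ ≡ ∑ i ∈ Finset.range m, X ^ (d * i) [SMOD Ideal.span {X ^ N}] := by
  simp only [pow_mul]
  refine (inv_one_sub_smodEq_geom_sum (by simp [hd]) m).mono ?_
  rw [Ideal.span_singleton_le_span_singleton, ← pow_mul]
  exact pow_dvd_pow X hN

end PowerSeries

theorem one_sub_pow_smodEq {R : Type*} [CommRing R] (x : R) (n : ℕ) :
    (1 - x) ^ n ≡ 1 - n * x [SMOD Ideal.span {x ^ 2}] := by
  rw [SModEq.sub_mem, Ideal.mem_span_singleton]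
  induction n with
  | zero => simp
  | succ n ih =>
    have h : (1 - x) ^ (n + 1) - (1 - (n + 1 : ℕ) * x) =
        (1 - x) * ((1 - x) ^ n - (1 - n * x)) + n * x ^ 2 := by
      push_cast; ring
    rw [h]
    exact dvd_add (dvd_mul_of_dvd_right ih _) (dvd_mul_left _ _)

theorem one_sub_X_pow_pow_smodEq {R : Type*} [CommRing R] {d N : ℕ} (n : ℕ) (hN : N ≤ 2 * d) :
    (1 - (X : R⟦X⟧) ^ d) ^ n ≡ 1 - (n : R⟦X⟧) * X ^ d [SMOD Ideal.span {X ^ N}] := by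
  refine (one_sub_pow_smodEq _ n).mono ?_
  rw [Ideal.span_singleton_le_span_singleton, ← pow_mul, mul_comm]
  exact pow_dvd_pow X hN

/-- The coefficient of `X^20` in
`(1-X²)⁻¹(1-X⁴)⁻¹(1-X⁶)⁻²(1-X⁸)⁻¹(1-X¹⁰)⁻²(1-X¹²)⁻¹(1-X¹⁴)⁻¹(1-X¹⁶)²¹(1-X¹⁸)¹²⁴`
in `ℚ⟦X⟧` equals `-97`. -/
theorem coeff20_lower_terms :
    PowerSeries.coeff 20
      ((1 - (X : ℚ⟦X⟧) ^ 2)⁻¹ * (1 - X ^ 4)⁻¹ * ((1 - X ^ 6)⁻¹) ^ 2 *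
        (1 - X ^ 8)⁻¹ * ((1 - X ^ 10)⁻¹) ^ 2 * (1 - X ^ 12)⁻¹ * (1 - X ^ 14)⁻¹ *
        (1 - X ^ 16) ^ 21 * (1 - X ^ 18) ^ 124) = -97 := by
  have geom (d m : ℕ) (hd : d ≠ 0) (hN : 21 ≤ d * m) :=
    inv_one_sub_X_pow_smodEq (k := ℚ) m hd hN
  have binom (d n : ℕ) (hN : 21 ≤ 2 * d) := one_sub_X_pow_pow_smodEq (R := ℚ) n hN
  have hmod := ((((((((geom 2 11 (by norm_num) (by norm_num)).mul
    (geom 4 6 (by norm_num) (by norm_num))).mul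
    ((geom 6 4 (by norm_num) (by norm_num)).pow 2)).mul
    (geom 8 3 (by norm_num) (by norm_num))).mul
    ((geom 10 3 (by norm_num) (by norm_num)).pow 2)).mul
    (geom 12 2 (by norm_num) (by norm_num))).mul
    (geom 14 2 (by norm_num) (by norm_num))).mul
    (binom 16 21 (by norm_num))).mul
    (binom 18 124 (by norm_num))
  rw [coeff_eq_of_smodEq_X_pow hmod (by norm_num)]
  simp only [Finset.sum_range_succ, Finset.sum_range_zero]
  ring_nf
  simp [coeff_X_pow, ← map_ofNat C, coeff_mul_C]
end

section
/- Let f(X) = (1-X^2)^{-1} · (1-X^4)^{-1} · (1-X^6)^{-2} · (1-X^8)^{-1} · (1-X^{10})^{-2} · (1-X^{12})^{-1} · (1-X^{14})^{-1} · (1-X^{16})^{21} · (1-X^{18})^{124} in ℚ⟦X⟧. Then for an integer m, the coefficient of X^20 in f(X) · (1-X^{20})^{-m} equals -1299 if and only if m = -1202. -/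
/-!
Modulo `X ^ 21` one has `(1 - X ^ 20) ^ (-m) ≡ 1 + m X ^ 20`, so the coefficient of `X ^ 20` in
`f(X) (1 - X ^ 20) ^ (-m)` is `[X ^ 20] f + m [X ^ 0] f = -97 + m`, which is `-1299` exactly when
`m = -1202`. The values `[X ^ 20] f = -97` and `[X ^ 0] f = 1` are obtained by multiplying out the
first 21 coefficients of the nine factors of `f`, a finite integer computation done by the kernel.
-/

open PowerSeries

/-- The series `f(X) = ∏ (1-X^{2n-2})^{-e(Out Fₙ)}` for `2 ≤ n ≤ 10`. -/
noncomputable def fSeries : PowerSeries ℚ :=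
  (1 - (X : ℚ⟦X⟧) ^ 2)⁻¹ * (1 - X ^ 4)⁻¹ * ((1 - X ^ 6)⁻¹) ^ 2 *
    (1 - X ^ 8)⁻¹ * ((1 - X ^ 10)⁻¹) ^ 2 * (1 - X ^ 12)⁻¹ * (1 - X ^ 14)⁻¹ *
    (1 - X ^ 16) ^ 21 * (1 - X ^ 18) ^ 124

namespace PowerSeries

section Units

variable {R : Type*} [CommRing R]

theorem X_pow_succ_dvd_val_zpow_sub {k : ℕ} (hk : 0 < k)
    {u : R⟦X⟧ˣ} (hu : (u : R⟦X⟧) = 1 - X ^ k) (z : ℤ) :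
    X ^ (k + 1) ∣ ((u ^ z : R⟦X⟧ˣ) : R⟦X⟧) - (1 - (z : R⟦X⟧) * X ^ k) := by
  obtain ⟨j, rfl⟩ : ∃ j, k = j + 1 := ⟨k - 1, by omega⟩
  induction z using Int.induction_on with
  | zero => simp
  | succ n ih =>
    obtain ⟨g, hg⟩ := ih
    refine ⟨g * (1 - X ^ (j + 1)) + (n : R⟦X⟧) * X ^ j, ?_⟩
    rw [zpow_add_one, Units.val_mul, hu]
    push_cast at hg ⊢
    linear_combination (1 - X ^ (j + 1)) * hg
  | pred n ih =>
    obtain ⟨g, hg⟩ := ih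
    set w := ((u⁻¹ : R⟦X⟧ˣ) : R⟦X⟧)
    have hw : w * (1 - X ^ (j + 1)) = 1 := by rw [← hu, Units.inv_mul]
    refine ⟨((n : R⟦X⟧) + 1) * X ^ j * w + g * w, ?_⟩
    rw [zpow_sub_one, Units.val_mul]
    push_cast at hg ⊢
    linear_combination w * hg + (1 + ((n : R⟦X⟧) + 1) * X ^ (j + 1)) * hw

theorem coeff_mul_val_zpow_of_val_eq_one_sub_X_pow {k : ℕ} (hk : 0 < k)
    {u : R⟦X⟧ˣ} (hu : (u : R⟦X⟧) = 1 - X ^ k) (φ : R⟦X⟧) (z : ℤ) :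
    coeff k (φ * ((u ^ z : R⟦X⟧ˣ) : R⟦X⟧)) = coeff k φ - z * coeff 0 φ := by
  obtain ⟨g, hg⟩ := X_pow_succ_dvd_val_zpow_sub hk hu z
  have : φ * ((u ^ z : R⟦X⟧ˣ) : R⟦X⟧) = φ - C (z : R) * (φ * X ^ k) + φ * g * X ^ (k + 1) := by
    rw [map_intCast]; linear_combination φ * hg
  rw [this, map_add, map_sub, coeff_C_mul, coeff_mul_X_pow', coeff_mul_X_pow']
  simp

end Units

def truncMul (N : ℕ) (a b : List ℤ) : List ℤ :=
  (List.range N).map fun n => ∑ i ∈ Finset.range (n + 1), a.getD i 0 * b.getD (n - i) 0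

def truncPow (N : ℕ) (a : List ℤ) : ℕ → List ℤ
  | 0 => [1]
  | n + 1 => truncMul N (truncPow N a n) a

def truncOneSubXPow (N k : ℕ) : List ℤ :=
  (List.range N).map fun n => (if n = 0 then 1 else 0) - if n = k then 1 else 0

def truncInvOneSubXPow (N k : ℕ) : List ℤ :=
  (List.range N).map fun n => if k ∣ n then 1 else 0

section TruncEq

variable {R : Type*} [Ring R]

/-- The coefficients are recorded as integers so that products of truncations can be evaluated
by `decide`. -/
def TruncEq (N : ℕ) (φ : R⟦X⟧) (a : List ℤ) : Prop :=
  ∀ n < N, coeff n φ = a.getD n 0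

theorem truncEq_one (N : ℕ) : TruncEq N (1 : R⟦X⟧) [1] := by
  intro n _
  rcases n with _ | n <;> simp [coeff_one]

theorem TruncEq.mul {N : ℕ} {φ ψ : R⟦X⟧} {a b : List ℤ} (ha : TruncEq N φ a)
    (hb : TruncEq N ψ b) : TruncEq N (φ * ψ) (truncMul N a b) := by
  intro n hn
  rw [coeff_mul, Finset.Nat.sum_antidiagonal_eq_sum_range_succ (fun i j => coeff i φ * coeff j ψ)]
  simp only [truncMul, List.getD_eq_getElem?_getD, List.getElem?_map, List.getElem?_range hn,
    Option.map_some, Option.getD_some, Int.cast_sum, Int.cast_mul]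
  refine Finset.sum_congr rfl fun i hi => ?_
  have hi : i ≤ n := Finset.mem_range_succ_iff.mp hi
  rw [ha i (by omega), hb (n - i) (by omega), List.getD_eq_getElem?_getD,
    List.getD_eq_getElem?_getD]

theorem TruncEq.pow {N : ℕ} {φ : R⟦X⟧} {a : List ℤ} (ha : TruncEq N φ a) (m : ℕ) :
    TruncEq N (φ ^ m) (truncPow N a m) := by
  induction m with
  | zero => exact truncEq_one N
  | succ m ih => exact ih.mul ha

theorem truncEq_one_sub_X_pow (N k : ℕ) :
    TruncEq N (1 - X ^ k : R⟦X⟧) (truncOneSubXPow N k) := by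
  intro n hn
  simp only [truncOneSubXPow, List.getD_eq_getElem?_getD, List.getElem?_map,
    List.getElem?_range hn, Option.map_some, Option.getD_some, map_sub, coeff_one, coeff_X_pow]
  push_cast
  rfl

end TruncEq

section Field

variable {K : Type*} [Field K]

theorem coeff_inv_one_sub_X_pow {k : ℕ} (hk : 0 < k) (n : ℕ) :
    coeff n (1 - X ^ k : K⟦X⟧)⁻¹ = if k ∣ n then 1 else 0 := by
  have hinv : (1 - X ^ k : K⟦X⟧)⁻¹ = mk fun n => if k ∣ n then 1 else 0 := by
    rw [inv_eq_iff_mul_eq_one (by simp [hk.ne'])]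
    ext n
    rw [mul_sub, mul_one, map_sub, coeff_mk, coeff_one]
    obtain hn | ⟨m, rfl⟩ : n < k ∨ ∃ m, n = m + k :=
      (lt_or_ge n k).imp_right fun h => ⟨n - k, by omega⟩
    · have : k ∣ n ↔ n = 0 := ⟨fun h => Nat.eq_zero_of_dvd_of_lt h hn, by rintro rfl; simp⟩
      simp [coeff_mul_X_pow', hn.not_ge, this]
    · simp [coeff_mul_X_pow, Nat.dvd_add_self_right, hk.ne']
  rw [hinv, coeff_mk]

theorem truncEq_inv_one_sub_X_pow {k : ℕ} (hk : 0 < k) (N : ℕ) :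
    TruncEq N (1 - X ^ k : K⟦X⟧)⁻¹ (truncInvOneSubXPow N k) := by
  intro n hn
  simp only [truncInvOneSubXPow, List.getD_eq_getElem?_getD, List.getElem?_map,
    List.getElem?_range hn, Option.map_some, Option.getD_some, coeff_inv_one_sub_X_pow hk]
  push_cast
  rfl

end Field

end PowerSeries

theorem coeff_fSeries : coeff 20 fSeries = -97 ∧ coeff 0 fSeries = 1 := by
  obtain ⟨L, hL, h20, h0⟩ : ∃ L, TruncEq 21 fSeries L ∧ L.getD 20 0 = -97 ∧ L.getD 0 0 = 1 :=
    ⟨_, by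
      unfold fSeries
      -- `TruncEq.pow` must come first: `φ ^ 2` also unifies with a product via `npowRec`.
      repeat' first
        | apply TruncEq.pow | apply TruncEq.mul
        | apply truncEq_inv_one_sub_X_pow (by norm_num) | apply truncEq_one_sub_X_pow,
      by decide +kernel, by decide +kernel⟩
  rw [hL 20 (by norm_num), hL 0 (by norm_num), h20, h0]
  norm_num

/-- For an integer `m`, the coefficient of `X^20` in `f(X)·(1-X^20)^{-m}` equals
`-1299` if and only if `m = -1202`.  Here `(1-X^20)^{-m}` is expressed via the
unit `u` of `ℚ⟦X⟧` whose underlying power series is `1 - X^20`. -/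
theorem coeff20_determines_eOutF11 (m : ℤ) (u : (PowerSeries ℚ)ˣ)
    (hu : (u : PowerSeries ℚ) = 1 - X ^ 20) :
    PowerSeries.coeff 20 (fSeries * ((u ^ (-m) : (PowerSeries ℚ)ˣ) : PowerSeries ℚ))
      = -1299 ↔ m = -1202 := by
  rw [coeff_mul_val_zpow_of_val_eq_one_sub_X_pow (by norm_num) hu, coeff_fSeries.1,
    coeff_fSeries.2]
  push_cast
  constructor
  · intro h
    exact_mod_cast (by linarith : (m : ℚ) = -1202)
  · rintro rfl
    norm_num
end
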